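/- arXiv:2509.25775 — 4 statements merged into one kernel-verified Lean document; each statement's English description precedes it below -/
import Mathlib

section
/- In the autonomy-aware clustering setup with squared Euclidean cost and autonomy independent of Y, the free energy F is differentiable in Y, and its partial gradient with respect to the representative y_ℓ is ∂F/∂y_ℓ = 2 Σ_{i=1}^N Σ_{j=1}^K ρ(i) π_Y^β(j|i) p(ℓ|j,i) (y_ℓ − x_i) for every ℓ = 1, …, K. -/
/-!
`F` is a `ρ`-weighted sum of log-sum-exp's of the average costs, and the gradient of
`log ∑ j, exp (f j)` is the softmax-weighted average of the `∇ f j`; here the softmax weights of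
`f j = -β d_avg(x_i, y_j)` are exactly the Gibbs probabilities `π_Y^β(j|i)`. Since `p` does not
depend on `Y`, the `ℓ`-th block of `∇ d_avg(x_i, y_j)` is `2 p(ℓ|j,i) (y_ℓ - x_i)`, and the
factor `-β` coming from the exponent cancels the prefactor `-1/β`.
-/
open InnerProductSpace Finset

section GradientCalculus

variable {E : Type*} [NormedAddCommGroup E] [InnerProductSpace ℝ E] [CompleteSpace E]
  {ι : Type*} [Fintype ι] {x : E}

theorem HasGradientAt.const_mul {f : E → ℝ} {f' : E} (hf : HasGradientAt f f' x) (c : ℝ) :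
    HasGradientAt (fun y => c * f y) (c • f') x := by
  rw [hasGradientAt_iff_hasFDerivAt, map_smul] at *
  exact hf.const_mul c

theorem HasGradientAt.fun_sum {f : ι → E → ℝ} {f' : ι → E}
    (hf : ∀ i, HasGradientAt (f i) (f' i) x) :
    HasGradientAt (fun y => ∑ i, f i y) (∑ i, f' i) x := by
  rw [hasGradientAt_iff_hasFDerivAt, map_sum]
  exact HasFDerivAt.fun_sum fun i _ => hasGradientAt_iff_hasFDerivAt.mp (hf i)

theorem HasGradientAt.log_sum_exp {f : ι → E → ℝ} {f' : ι → E}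
    (hf : ∀ i, HasGradientAt (f i) (f' i) x) :
    HasGradientAt (fun y => Real.log (∑ i, Real.exp (f i y)))
      (∑ i, (Real.exp (f i x) / ∑ j, Real.exp (f j x)) • f' i) x := by
  rcases isEmpty_or_nonempty ι with _ | _
  · simpa using hasGradientAt_const x (Real.log 0)
  have hS : ∑ j, Real.exp (f j x) ≠ 0 := (sum_pos (fun j _ => Real.exp_pos _) univ_nonempty).ne'
  have hexp : ∀ i, HasFDerivAt (fun y => Real.exp (f i y))
      (Real.exp (f i x) • toDual ℝ E (f' i)) x := fun i =>
    (hasGradientAt_iff_hasFDerivAt.mp (hf i)).exp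
  rw [hasGradientAt_iff_hasFDerivAt]
  refine ((HasFDerivAt.fun_sum fun i _ => hexp i).log hS).congr_fderiv ?_
  simp only [map_sum, map_smul, div_eq_inv_mul, mul_smul, smul_sum]

end GradientCalculus

theorem hasGradientAt_sum_mul_norm_sub_sq {ι : Type*} [Fintype ι] {E : ι → Type*}
    [∀ k, NormedAddCommGroup (E k)] [∀ k, InnerProductSpace ℝ (E k)] [∀ k, CompleteSpace (E k)]
    (c : ι → ℝ) (a : ∀ k, E k) (Y : PiLp 2 E) :
    HasGradientAt (fun Z : PiLp 2 E => ∑ k, c k * ‖a k - Z k‖ ^ 2)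
      (WithLp.toLp 2 fun k => (2 * c k) • (Y k - a k)) Y := by
  have hcoord : ∀ k, HasFDerivAt (fun Z : PiLp 2 E => ‖a k - Z k‖ ^ 2)
      ((innerSL ℝ ((2 : ℝ) • (Y k - a k))).comp (PiLp.proj 2 E k)) Y := by
    intro k
    refine ((hasFDerivAt_const (a k) Y).sub (PiLp.proj 2 E k).hasFDerivAt).norm_sq.congr_fderiv ?_
    ext v
    simp
  rw [hasGradientAt_iff_hasFDerivAt]
  refine (HasFDerivAt.fun_sum fun k _ => (hcoord k).const_mul (c k)).congr_fderiv ?_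
  ext v
  simp only [toDual_apply_apply, PiLp.inner_apply, _root_.sum_apply,
    smul_apply, ContinuousLinearMap.comp_apply, PiLp.proj_apply,
    innerSL_apply_apply, real_inner_smul_left, smul_eq_mul]
  exact sum_congr rfl fun k _ => by ring

theorem stmt_1_general (N K d : ℕ) (β : ℝ) (hβ : 0 < β)
    (x : Fin N → EuclideanSpace ℝ (Fin d)) (ρ : Fin N → ℝ)
    (p : Fin K → Fin K → Fin N → ℝ)
    (davg : (PiLp 2 fun _ : Fin K => EuclideanSpace ℝ (Fin d)) → Fin N → Fin K → ℝ)
    (hdavg : ∀ Y i j, davg Y i j = ∑ k, p k j i * ‖x i - Y k‖ ^ 2)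
    (πpol : (PiLp 2 fun _ : Fin K => EuclideanSpace ℝ (Fin d)) → Fin K → Fin N → ℝ)
    (hπ : ∀ Y j i, πpol Y j i =
      Real.exp (-β * davg Y i j) / ∑ ℓ, Real.exp (-β * davg Y i ℓ))
    (F : (PiLp 2 fun _ : Fin K => EuclideanSpace ℝ (Fin d)) → ℝ)
    (hF : ∀ Y, F Y = -(1 / β) * ∑ i, ρ i * Real.log (∑ j, Real.exp (-β * davg Y i j)))
    (Y : PiLp 2 fun _ : Fin K => EuclideanSpace ℝ (Fin d))
    (G : PiLp 2 fun _ : Fin K => EuclideanSpace ℝ (Fin d))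
    (hG : ∀ ℓ, G ℓ = (2 : ℝ) • ∑ i, ∑ j, (ρ i * πpol Y j i * p ℓ j i) • (Y ℓ - x i)) :
    HasGradientAt F G Y := by
  have hdavg_grad : ∀ i j, HasGradientAt (fun Z => davg Z i j)
      (WithLp.toLp 2 fun k => (2 * p k j i) • (Y k - x i)) Y := fun i j => by
    simpa only [hdavg] using hasGradientAt_sum_mul_norm_sub_sq (fun k => p k j i) (fun _ => x i) Y
  have hlog : ∀ i, HasGradientAt (fun Z => Real.log (∑ j, Real.exp (-β * davg Z i j)))
      (∑ j, πpol Y j i • (-β) • WithLp.toLp 2 fun k => (2 * p k j i) • (Y k - x i)) Y :=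
    fun i => by
      simpa only [hπ] using HasGradientAt.log_sum_exp fun j => (hdavg_grad i j).const_mul (-β)
  have hFgrad := (HasGradientAt.fun_sum fun i => (hlog i).const_mul (ρ i)).const_mul (-(1 / β))
  rw [funext hF]
  convert hFgrad using 1
  ext ℓ : 1
  simp only [hG, smul_sum, smul_smul, one_div, neg_smul, smul_neg, sum_neg_distrib, neg_mul,
    neg_neg, WithLp.ofLp_sum, WithLp.ofLp_smul, Finset.sum_apply, Pi.smul_apply]
  refine sum_congr rfl fun i _ => sum_congr rfl fun j _ => ?_
  congr 1
  field_simp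

/-- In the autonomy-aware clustering setup with squared Euclidean cost and
autonomy independent of `Y`, the free energy `F` is differentiable in `Y` and its gradient
has `ℓ`-th block `∂F/∂y_ℓ = 2 ∑ i ∑ j ρ(i) π_Y^β(j|i) p(ℓ|j,i) (y_ℓ − x_i)`. -/
theorem stmt_1 (N K d : ℕ) (β : ℝ) (hβ : 0 < β)
    (x : Fin N → EuclideanSpace ℝ (Fin d)) (ρ : Fin N → ℝ)
    (hρ : ∀ i, 0 ≤ ρ i) (hρ1 : ∑ i, ρ i = 1)
    (p : Fin K → Fin K → Fin N → ℝ)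
    (hp : ∀ k j i, 0 ≤ p k j i) (hp1 : ∀ j i, ∑ k, p k j i = 1)
    (davg : (PiLp 2 fun _ : Fin K => EuclideanSpace ℝ (Fin d)) → Fin N → Fin K → ℝ)
    (hdavg : ∀ Y i j, davg Y i j = ∑ k, p k j i * ‖x i - Y k‖ ^ 2)
    (πpol : (PiLp 2 fun _ : Fin K => EuclideanSpace ℝ (Fin d)) → Fin K → Fin N → ℝ)
    (hπ : ∀ Y j i, πpol Y j i =
      Real.exp (-β * davg Y i j) / ∑ ℓ, Real.exp (-β * davg Y i ℓ))
    (F : (PiLp 2 fun _ : Fin K => EuclideanSpace ℝ (Fin d)) → ℝ)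
    (hF : ∀ Y, F Y = -(1 / β) * ∑ i, ρ i * Real.log (∑ j, Real.exp (-β * davg Y i j)))
    (Y : PiLp 2 fun _ : Fin K => EuclideanSpace ℝ (Fin d))
    (G : PiLp 2 fun _ : Fin K => EuclideanSpace ℝ (Fin d))
    (hG : ∀ ℓ, G ℓ = (2 : ℝ) • ∑ i, ∑ j, (ρ i * πpol Y j i * p ℓ j i) • (Y ℓ - x i)) :
    HasGradientAt F G Y :=
  stmt_1_general N K d β hβ x ρ p davg hdavg πpol hπ F hF Y G hG
end

section
/- In the autonomy-aware clustering setup with squared Euclidean cost and autonomy independent of Y, the matrix Δ = Σ_{i=1}^N ( Σ_{j=1}^K P_A^{ij} z_i z_iᵀ P^{ij} − ρ(i) P^i z_i z_iᵀ P^i ) ∈ ℝ^{Kd×Kd} is positive semidefinite; indeed, for every Ψ = (ψ_1ᵀ,…,ψ_Kᵀ)ᵀ ∈ ℝ^{Kd}, ΨᵀΔΨ = Σ_{i=1}^N ρ(i) [ Σ_{j=1}^K π_Y^β(j|i) (Σ_{k=1}^K p(k|j,i)(y_k − x_i)ᵀψ_k)² − (Σ_{j=1}^K Σ_{k=1}^K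 π_Y^β(j|i) p(k|j,i)(y_k − x_i)ᵀψ_k)² ] ≥ 0. -/
open Matrix

section Helpers
variable {ι : Type*} [Fintype ι]

lemma qf_eq (M : Matrix ι ι ℝ) (Ψ : ι → ℝ) :
    Ψ ⬝ᵥ M.mulVec Ψ = ∑ a, ∑ b, Ψ a * M a b * Ψ b := by
  simp [dotProduct, Matrix.mulVec, Finset.mul_sum, mul_assoc]

lemma qf_sum {κ : Type*} (s : Finset κ) (M : κ → Matrix ι ι ℝ) (Ψ : ι → ℝ) :
    Ψ ⬝ᵥ (∑ j ∈ s, M j).mulVec Ψ = ∑ j ∈ s, Ψ ⬝ᵥ (M j).mulVec Ψ := by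
  induction s using Finset.cons_induction with
  | empty => simp
  | cons a s ha ih => simp [Matrix.add_mulVec, dotProduct_add, Finset.sum_cons, ih]

lemma qf_sub (A B : Matrix ι ι ℝ) (Ψ : ι → ℝ) :
    Ψ ⬝ᵥ (A - B).mulVec Ψ = Ψ ⬝ᵥ A.mulVec Ψ - Ψ ⬝ᵥ B.mulVec Ψ := by
  simp [Matrix.sub_mulVec, dotProduct_sub]

lemma qf_smul (r : ℝ) (A : Matrix ι ι ℝ) (Ψ : ι → ℝ) :
    Ψ ⬝ᵥ ((r • A).mulVec Ψ) = r * (Ψ ⬝ᵥ A.mulVec Ψ) := by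
  rw [Matrix.smul_mulVec, dotProduct_smul]; simp

variable [DecidableEq ι]

lemma qf_dvd (w zz Ψ : ι → ℝ) :
    Ψ ⬝ᵥ ((Matrix.diagonal w * Matrix.vecMulVec zz zz * Matrix.diagonal w).mulVec Ψ)
      = (∑ a, w a * zz a * Ψ a) ^ 2 := by
  rw [qf_eq, sq, Finset.sum_mul_sum]
  refine Finset.sum_congr rfl fun a _ => Finset.sum_congr rfl fun b _ => ?_
  simp only [Matrix.mul_diagonal, Matrix.diagonal_mul, Matrix.vecMulVec_apply]
  ring

lemma kron_diag_one (K d : ℕ) (v : Fin K → ℝ) :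
    Matrix.kroneckerMap (· * ·) (Matrix.diagonal v) (1 : Matrix (Fin d) (Fin d) ℝ)
      = Matrix.diagonal (fun a : Fin K × Fin d => v a.1) := by
  ext ⟨k, m⟩ ⟨k', m'⟩
  simp [Matrix.kroneckerMap_apply, Matrix.diagonal_apply, Matrix.one_apply, Prod.ext_iff]
  by_cases hk : k = k' <;> by_cases hm : m = m' <;> simp [hk, hm]

lemma sum_smul_diag {κ : Type*} [Fintype κ] (π : κ → ℝ) (f : κ → ι → ℝ) :
    (∑ j, π j • Matrix.diagonal (f j)) = Matrix.diagonal (fun a => ∑ j, π j * f j a) := by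
  ext a b
  by_cases h : a = b <;>
    simp [h, Matrix.sum_apply, Matrix.diagonal_apply, Matrix.diagonal_apply_ne]

lemma var_nonneg {κ : Type*} [Fintype κ] (π A : κ → ℝ) (hπ : ∀ j, 0 ≤ π j)
    (hπ1 : ∑ j, π j ≤ 1) :
    (∑ j, π j * A j) ^ 2 ≤ ∑ j, π j * A j ^ 2 := by
  have h1 : (∑ j, π j * A j) ^ 2
      = (∑ j, Real.sqrt (π j) * (Real.sqrt (π j) * A j)) ^ 2 := by
    congr 1
    refine Finset.sum_congr rfl fun j _ => ?_
    rw [← mul_assoc, Real.mul_self_sqrt (hπ j)]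
  have h2 := Finset.sum_mul_sq_le_sq_mul_sq Finset.univ
    (fun j => Real.sqrt (π j)) (fun j => Real.sqrt (π j) * A j)
  have h3 : (∑ j, Real.sqrt (π j) ^ 2) = ∑ j, π j :=
    Finset.sum_congr rfl fun j _ => Real.sq_sqrt (hπ j)
  have h4 : (∑ j, (Real.sqrt (π j) * A j) ^ 2) = ∑ j, π j * A j ^ 2 :=
    Finset.sum_congr rfl fun j _ => by rw [mul_pow, Real.sq_sqrt (hπ j)]
  have h5 : 0 ≤ ∑ j, π j * A j ^ 2 :=
    Finset.sum_nonneg fun j _ => mul_nonneg (hπ j) (sq_nonneg _)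
  calc (∑ j, π j * A j) ^ 2 = (∑ j, Real.sqrt (π j) * (Real.sqrt (π j) * A j)) ^ 2 := h1
    _ ≤ (∑ j, Real.sqrt (π j) ^ 2) * (∑ j, (Real.sqrt (π j) * A j) ^ 2) := h2
    _ = (∑ j, π j) * (∑ j, π j * A j ^ 2) := by rw [h3, h4]
    _ ≤ 1 * (∑ j, π j * A j ^ 2) := mul_le_mul_of_nonneg_right hπ1 h5
    _ = _ := one_mul _

end Helpers

/-- The autonomy-variance matrix
`Δ = ∑ i (∑ j P_A^{ij} z_i z_iᵀ P^{ij} − ρ(i) P^i z_i z_iᵀ P^i)` is positive semidefinite,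
and its quadratic form is the Gibbs variance
`ΨᵀΔΨ = ∑ i ρ(i) [∑ j π(j|i) (∑ k p(k|j,i)(y_k−x_i)ᵀψ_k)² − (∑ j ∑ k π(j|i) p(k|j,i)(y_k−x_i)ᵀψ_k)²] ≥ 0`. -/
theorem stmt_6 (N K d : ℕ) (β : ℝ) (hβ : 0 < β)
    (x : Fin N → EuclideanSpace ℝ (Fin d)) (ρ : Fin N → ℝ)
    (hρ : ∀ i, 0 ≤ ρ i) (hρ1 : ∑ i, ρ i = 1)
    (p : Fin K → Fin K → Fin N → ℝ)
    (hp : ∀ k j i, 0 ≤ p k j i) (hp1 : ∀ j i, ∑ k, p k j i = 1)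
    (Y : Fin K → EuclideanSpace ℝ (Fin d))
    (davg : Fin N → Fin K → ℝ)
    (hdavg : ∀ i j, davg i j = ∑ k, p k j i * ‖x i - Y k‖ ^ 2)
    (πpol : Fin K → Fin N → ℝ)
    (hπ : ∀ j i, πpol j i = Real.exp (-β * davg i j) / ∑ ℓ, Real.exp (-β * davg i ℓ))
    (z : Fin N → (Fin K × Fin d) → ℝ)
    (hz : ∀ i km, z i km = Y km.1 km.2 - x i km.2)
    (Pij : Fin N → Fin K → Matrix (Fin K × Fin d) (Fin K × Fin d) ℝ)
    (hPij : ∀ i j, Pij i j = Matrix.kroneckerMap (· * ·)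
      (Matrix.diagonal fun k => p k j i) (1 : Matrix (Fin d) (Fin d) ℝ))
    (PA : Fin N → Fin K → Matrix (Fin K × Fin d) (Fin K × Fin d) ℝ)
    (hPA : ∀ i j, PA i j = (ρ i * πpol j i) • Pij i j)
    (Pbar : Fin N → Matrix (Fin K × Fin d) (Fin K × Fin d) ℝ)
    (hPbar : ∀ i, Pbar i = ∑ j, πpol j i • Pij i j)
    (Δ : Matrix (Fin K × Fin d) (Fin K × Fin d) ℝ)
    (hΔ : Δ = ∑ i, ((∑ j, PA i j * Matrix.vecMulVec (z i) (z i) * Pij i j)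
      - ρ i • (Pbar i * Matrix.vecMulVec (z i) (z i) * Pbar i))) :
    Δ.PosSemidef ∧
    ∀ Ψ : (Fin K × Fin d) → ℝ,
      Ψ ⬝ᵥ Δ.mulVec Ψ =
        (∑ i, ρ i *
          ((∑ j, πpol j i * (∑ k, p k j i * ∑ m, (Y k m - x i m) * Ψ (k, m)) ^ 2)
            - (∑ j, ∑ k, πpol j i * p k j i * ∑ m, (Y k m - x i m) * Ψ (k, m)) ^ 2)) ∧
      0 ≤ Ψ ⬝ᵥ Δ.mulVec Ψ := by
  -- diagonal forms
  have hPijD : ∀ i j, Pij i j = Matrix.diagonal (fun a : Fin K × Fin d => p a.1 j i) := by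
    intro i j; rw [hPij, kron_diag_one]
  have hPbarD : ∀ i, Pbar i
      = Matrix.diagonal (fun a : Fin K × Fin d => ∑ j, πpol j i * p a.1 j i) := by
    intro i
    rw [hPbar]
    simp only [hPijD]
    exact sum_smul_diag _ _
  -- policy facts
  have hπnn : ∀ j i, 0 ≤ πpol j i := by
    intro j i
    rw [hπ]
    exact div_nonneg (Real.exp_pos _).le
      (Finset.sum_nonneg fun ℓ _ => (Real.exp_pos _).le)
  have hπsum : ∀ i, ∑ j, πpol j i ≤ 1 := by
    intro i
    rcases isEmpty_or_nonempty (Fin K) with hK | hK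
    · simp
    · have hS : 0 < ∑ ℓ, Real.exp (-β * davg i ℓ) :=
        Finset.sum_pos (fun ℓ _ => Real.exp_pos _) Finset.univ_nonempty
      have : ∑ j, πpol j i = 1 := by
        simp only [hπ]
        rw [← Finset.sum_div, div_self hS.ne']
      rw [this]
  -- quadratic form
  have hQ : ∀ Ψ : (Fin K × Fin d) → ℝ,
      Ψ ⬝ᵥ Δ.mulVec Ψ =
        (∑ i, ρ i *
          ((∑ j, πpol j i * (∑ k, p k j i * ∑ m, (Y k m - x i m) * Ψ (k, m)) ^ 2)
            - (∑ j, ∑ k, πpol j i * p k j i * ∑ m, (Y k m - x i m) * Ψ (k, m)) ^ 2)) := by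
    intro Ψ
    rw [hΔ, qf_sum]
    refine Finset.sum_congr rfl fun i _ => ?_
    rw [qf_sub, qf_sum, qf_smul]
    have hterm1 : ∀ j, Ψ ⬝ᵥ ((PA i j * Matrix.vecMulVec (z i) (z i) * Pij i j).mulVec Ψ)
        = ρ i * (πpol j i *
          (∑ k, p k j i * ∑ m, (Y k m - x i m) * Ψ (k, m)) ^ 2) := by
      intro j
      rw [hPA, hPijD, Matrix.smul_mul, Matrix.smul_mul, qf_smul, qf_dvd]
      have hs : (∑ a : Fin K × Fin d, p a.1 j i * z i a * Ψ a)
          = ∑ k, p k j i * ∑ m, (Y k m - x i m) * Ψ (k, m) := by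
        rw [Fintype.sum_prod_type]
        refine Finset.sum_congr rfl fun k _ => ?_
        rw [Finset.mul_sum]
        refine Finset.sum_congr rfl fun m _ => ?_
        rw [hz]; ring
      rw [hs, mul_assoc]
    have hterm2 : Ψ ⬝ᵥ ((Pbar i * Matrix.vecMulVec (z i) (z i) * Pbar i).mulVec Ψ)
        = (∑ j, ∑ k, πpol j i * p k j i * ∑ m, (Y k m - x i m) * Ψ (k, m)) ^ 2 := by
      rw [hPbarD, qf_dvd]
      congr 1
      rw [Fintype.sum_prod_type]
      have hk : ∀ k : Fin K, (∑ m, (∑ j, πpol j i * p k j i) * z i (k, m) * Ψ (k, m))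
          = ∑ j, πpol j i * p k j i * ∑ m, (Y k m - x i m) * Ψ (k, m) := by
        intro k
        have h1 : (∑ m, (∑ j, πpol j i * p k j i) * z i (k, m) * Ψ (k, m))
            = (∑ j, πpol j i * p k j i) * ∑ m, (Y k m - x i m) * Ψ (k, m) := by
          rw [Finset.mul_sum]
          refine Finset.sum_congr rfl fun m _ => ?_
          rw [hz]; ring
        rw [h1, Finset.sum_mul]
      rw [Finset.sum_congr rfl fun k _ => hk k, Finset.sum_comm]
    rw [hterm2]
    rw [Finset.sum_congr rfl fun j _ => hterm1 j]
    rw [← Finset.mul_sum, ← mul_sub]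
  -- nonnegativity of the quadratic form
  have hNN : ∀ Ψ : (Fin K × Fin d) → ℝ, 0 ≤ Ψ ⬝ᵥ Δ.mulVec Ψ := by
    intro Ψ
    rw [hQ]
    refine Finset.sum_nonneg fun i _ => mul_nonneg (hρ i) ?_
    rw [sub_nonneg]
    have h2 : (∑ j, ∑ k, πpol j i * p k j i * ∑ m, (Y k m - x i m) * Ψ (k, m))
        = ∑ j, πpol j i * ∑ k, p k j i * ∑ m, (Y k m - x i m) * Ψ (k, m) := by
      refine Finset.sum_congr rfl fun j _ => ?_
      rw [Finset.mul_sum]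
      exact Finset.sum_congr rfl fun k _ => (mul_assoc _ _ _)
    rw [h2]
    exact var_nonneg (fun j => πpol j i)
      (fun j => ∑ k, p k j i * ∑ m, (Y k m - x i m) * Ψ (k, m))
      (fun j => hπnn j i) (hπsum i)
  -- symmetry
  have hsym : ∀ a b, Δ a b = Δ b a := by
    intro a b
    rw [hΔ]
    simp only [Matrix.sum_apply, Matrix.sub_apply, Matrix.smul_apply, hPA, hPijD, hPbarD,
      Matrix.smul_mul, Matrix.mul_diagonal, Matrix.diagonal_mul, Matrix.vecMulVec_apply,
      smul_eq_mul]
    refine Finset.sum_congr rfl fun i _ => ?_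
    congr 1
    · exact Finset.sum_congr rfl fun j _ => by ring
    · ring
  have hHerm : Δ.IsHermitian := by
    ext a b
    simp only [Matrix.conjTranspose_apply, star_trivial]
    exact hsym b a
  exact ⟨Matrix.posSemidef_iff_dotProduct_mulVec.mpr ⟨hHerm, fun v => by simpa using hNN v⟩, fun Ψ => ⟨hQ Ψ, hNN Ψ⟩⟩
end

section
/- Let P̂ ∈ ℝ^{n×n} be a positive-definite diagonal matrix, let Δ ∈ ℝ^{n×n} be symmetric positive semidefinite with Δ ≠ 0, and for β > 0 set H(β) = P̂ − 2βΔ. Let β_cr = 1 / (2 λ_max(P̂^{−1/2} Δ P̂^{−1/2})). Then H(β) is positive definite for every β with 0 < β < β_cr, H(β_cr) is positive semidefinite but singular, and for every β > β_cr there exists Ψ ∈ ℝ^n with Ψᵀ H(β) Ψ < 0. -/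
/-!
Write `P = diag A` and let `λ` be the largest eigenvalue of `P^{-1/2} Δ P^{-1/2}`. The substitution
`v = P^{1/2} u` turns its variational characterisation into the generalised Rayleigh bound
`uᵀ Δ u ≤ λ uᵀ P u`, with equality at some `u ≠ 0`. Hence
`uᵀ (P - cΔ) u ≥ (1 - cλ) uᵀ P u` for `c ≥ 0`, with equality at the extremal `u`, and the sign of
`1 - cλ` decides everything: `Δ ≠ 0` forces `λ > 0`, so `c = 2β` crosses `cλ = 1` exactly at
`β = β_cr`. At `β_cr` the extremal vector has zero energy for a positive semidefinite form and
so lies in its kernel.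
-/

open Matrix

namespace Matrix

variable {ι : Type*} [Fintype ι]

def IsMaxRayleighQuotient (Δ P : Matrix ι ι ℝ) (lam : ℝ) : Prop :=
  (∀ u, u ⬝ᵥ Δ *ᵥ u ≤ lam * (u ⬝ᵥ P *ᵥ u)) ∧ ∃ u ≠ 0, u ⬝ᵥ Δ *ᵥ u = lam * (u ⬝ᵥ P *ᵥ u)

theorem dotProduct_transpose_mul_mul_mulVec (B Δ : Matrix ι ι ℝ) (x : ι → ℝ) :
    x ⬝ᵥ (Bᵀ * Δ * B) *ᵥ x = (B *ᵥ x) ⬝ᵥ Δ *ᵥ (B *ᵥ x) := by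
  rw [← mulVec_mulVec, ← mulVec_mulVec, mulVec_transpose, dotProduct_comm, ← dotProduct_mulVec,
    dotProduct_comm]

theorem IsMaxRayleighQuotient.of_congr [DecidableEq ι] {Δ P B : Matrix ι ι ℝ} {lam : ℝ}
    (h : IsMaxRayleighQuotient (Bᵀ * Δ * B) (Bᵀ * P * B) lam) (hB : IsUnit B) :
    IsMaxRayleighQuotient Δ P lam := by
  obtain ⟨hle, x, hx, hxeq⟩ := h
  simp only [dotProduct_transpose_mul_mul_mulVec] at hle hxeq
  refine ⟨fun u ↦ ?_, B *ᵥ x, ?_, hxeq⟩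
  · obtain ⟨y, rfl⟩ := mulVec_surjective_iff_isUnit.2 hB u
    exact hle y
  · rwa [← mulVec_zero B, (mulVec_injective_iff_isUnit.2 hB).ne_iff]

theorem dotProduct_sub_smul_mulVec (P Δ : Matrix ι ι ℝ) (c : ℝ) (u : ι → ℝ) :
    u ⬝ᵥ (P - c • Δ) *ᵥ u = u ⬝ᵥ P *ᵥ u - c * (u ⬝ᵥ Δ *ᵥ u) := by
  rw [sub_mulVec, dotProduct_sub, smul_mulVec, dotProduct_smul, smul_eq_mul]

theorem exists_pos_dotProduct_mulVec_of_posSemidef [DecidableEq ι] {Δ : Matrix ι ι ℝ}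
    (hΔ : Δ.PosSemidef) (hΔ0 : Δ ≠ 0) : ∃ u, 0 < u ⬝ᵥ Δ *ᵥ u := by
  by_contra! h
  refine hΔ0 (ext_of_mulVec_single fun i ↦ ?_)
  have hzero : star (Pi.single i 1 : ι → ℝ) ⬝ᵥ Δ *ᵥ Pi.single i 1 = 0 :=
    le_antisymm (h _) (hΔ.dotProduct_mulVec_nonneg _)
  rw [(hΔ.dotProduct_mulVec_zero_iff _).1 hzero, zero_mulVec]

namespace IsMaxRayleighQuotient

variable {Δ P : Matrix ι ι ℝ} {lam c : ℝ}

theorem pos [DecidableEq ι] (h : IsMaxRayleighQuotient Δ P lam) (hP : P.PosSemidef)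
    (hΔ : Δ.PosSemidef) (hΔ0 : Δ ≠ 0) : 0 < lam := by
  obtain ⟨u, hu⟩ := exists_pos_dotProduct_mulVec_of_posSemidef hΔ hΔ0
  have hPu : 0 ≤ u ⬝ᵥ P *ᵥ u := by simpa using hP.dotProduct_mulVec_nonneg u
  exact pos_of_mul_pos_left (hu.trans_le (h.1 u)) hPu

theorem mul_dotProduct_le (h : IsMaxRayleighQuotient Δ P lam) (hc : 0 ≤ c) (u : ι → ℝ) :
    (1 - c * lam) * (u ⬝ᵥ P *ᵥ u) ≤ u ⬝ᵥ (P - c • Δ) *ᵥ u := by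
  rw [dotProduct_sub_smul_mulVec]
  nlinarith [mul_le_mul_of_nonneg_left (h.1 u) hc]

theorem posDef_sub_smul (h : IsMaxRayleighQuotient Δ P lam) (hP : P.PosDef)
    (hΔ : Δ.IsHermitian) (hc : 0 ≤ c) (hclam : c * lam < 1) : (P - c • Δ).PosDef := by
  refine posDef_iff_dotProduct_mulVec.2 ⟨hP.isHermitian.sub (hΔ.smul rfl), fun u hu ↦ ?_⟩
  have hPu : 0 < u ⬝ᵥ P *ᵥ u := by simpa using hP.dotProduct_mulVec_pos hu
  simpa using (mul_pos (sub_pos.2 hclam) hPu).trans_le (h.mul_dotProduct_le hc u)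

theorem posSemidef_sub_smul (h : IsMaxRayleighQuotient Δ P lam) (hP : P.PosSemidef)
    (hΔ : Δ.IsHermitian) (hc : 0 ≤ c) (hclam : c * lam ≤ 1) : (P - c • Δ).PosSemidef := by
  refine posSemidef_iff_dotProduct_mulVec.2 ⟨hP.isHermitian.sub (hΔ.smul rfl), fun u ↦ ?_⟩
  have hPu : 0 ≤ u ⬝ᵥ P *ᵥ u := by simpa using hP.dotProduct_mulVec_nonneg u
  simpa using (mul_nonneg (sub_nonneg.2 hclam) hPu).trans (h.mul_dotProduct_le hc u)

theorem exists_mulVec_sub_smul_eq_zero (h : IsMaxRayleighQuotient Δ P lam) (hP : P.PosSemidef)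
    (hΔ : Δ.IsHermitian) (hc : 0 ≤ c) (hclam : c * lam = 1) :
    ∃ u ≠ 0, (P - c • Δ) *ᵥ u = 0 := by
  obtain ⟨u, hu, hueq⟩ := h.2
  refine ⟨u, hu, ((h.posSemidef_sub_smul hP hΔ hc hclam.le).dotProduct_mulVec_zero_iff u).1 ?_⟩
  rw [star_trivial, dotProduct_sub_smul_mulVec, hueq, ← mul_assoc, hclam, one_mul, sub_self]

theorem exists_dotProduct_sub_smul_mulVec_neg (h : IsMaxRayleighQuotient Δ P lam)
    (hP : P.PosDef) (hclam : 1 < c * lam) : ∃ u, u ⬝ᵥ (P - c • Δ) *ᵥ u < 0 := by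
  obtain ⟨u, hu, hueq⟩ := h.2
  have hPu : 0 < u ⬝ᵥ P *ᵥ u := by simpa using hP.dotProduct_mulVec_pos hu
  refine ⟨u, ?_⟩
  rw [dotProduct_sub_smul_mulVec, hueq]
  nlinarith

end IsMaxRayleighQuotient

end Matrix

theorem stmt_7_general (n : ℕ) (A : Fin n → ℝ) (hA : ∀ i, 0 < A i)
    (Δ : Matrix (Fin n) (Fin n) ℝ) (hΔpsd : Δ.PosSemidef) (hΔne : Δ ≠ 0)
    (M : Matrix (Fin n) (Fin n) ℝ)
    (hM : M = Matrix.diagonal (fun i => (Real.sqrt (A i))⁻¹) * Δ *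
      Matrix.diagonal (fun i => (Real.sqrt (A i))⁻¹))
    (lamMax : ℝ)
    (hlamUb : ∀ v : Fin n → ℝ, v ⬝ᵥ M.mulVec v ≤ lamMax * (v ⬝ᵥ v))
    (hlamAtt : ∃ v : Fin n → ℝ, v ≠ 0 ∧ v ⬝ᵥ M.mulVec v = lamMax * (v ⬝ᵥ v))
    (βcr : ℝ) (hβcr : βcr = 1 / (2 * lamMax)) :
    (∀ β : ℝ, 0 < β → β < βcr → (Matrix.diagonal A - (2 * β) • Δ).PosDef) ∧
    (Matrix.diagonal A - (2 * βcr) • Δ).PosSemidef ∧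
    (∃ Ψ : Fin n → ℝ, Ψ ≠ 0 ∧ (Matrix.diagonal A - (2 * βcr) • Δ).mulVec Ψ = 0) ∧
    (∀ β : ℝ, βcr < β →
      ∃ Ψ : Fin n → ℝ, Ψ ⬝ᵥ (Matrix.diagonal A - (2 * β) • Δ).mulVec Ψ < 0) := by
  set B := diagonal fun i ↦ (Real.sqrt (A i))⁻¹
  have hBAB : Bᵀ * diagonal A * B = 1 := by
    simp only [B, diagonal_transpose, diagonal_mul_diagonal, ← diagonal_one]
    congr 1
    funext i
    rw [mul_right_comm, ← mul_inv, Real.mul_self_sqrt (hA i).le, inv_mul_cancel₀ (hA i).ne']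
  have hB : IsUnit B :=
    isUnit_diagonal.2 (Pi.isUnit_iff.2 fun i ↦ (inv_pos.2 (Real.sqrt_pos.2 (hA i))).ne'.isUnit)
  have hR : IsMaxRayleighQuotient Δ (diagonal A) lamMax := by
    refine IsMaxRayleighQuotient.of_congr ?_ hB
    rw [hBAB, diagonal_transpose, ← hM]
    simp only [IsMaxRayleighQuotient, one_mulVec]
    exact ⟨hlamUb, hlamAtt⟩
  have hP : (diagonal A).PosDef := posDef_diagonal_iff.2 hA
  have hlam : 0 < lamMax := hR.pos hP.posSemidef hΔpsd hΔne
  have hβcr_pos : 0 < βcr := by rw [hβcr]; positivity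
  have hcrit : 2 * βcr * lamMax = 1 := by rw [hβcr]; field_simp
  have hΔ := hΔpsd.isHermitian
  refine ⟨fun β hβ hβlt ↦ hR.posDef_sub_smul hP hΔ (by positivity) ?_,
    hR.posSemidef_sub_smul hP.posSemidef hΔ (by positivity) hcrit.le,
    hR.exists_mulVec_sub_smul_eq_zero hP.posSemidef hΔ (by positivity) hcrit,
    fun β hβ ↦ hR.exists_dotProduct_sub_smul_mulVec_neg hP ?_⟩
  · nlinarith
  · nlinarith

/-- **Phase transitions.** Let `P̂ = diag A` be positive definite, `Δ` symmetric
positive semidefinite with `Δ ≠ 0`, and `H(β) = P̂ − 2βΔ`.  With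
`β_cr = 1/(2 λ_max(P̂^{-1/2} Δ P̂^{-1/2}))` (λ_max characterized variationally), `H(β)` is
positive definite for `0 < β < β_cr`, `H(β_cr)` is positive semidefinite but singular, and for
`β > β_cr` there is a direction of negative curvature. -/
theorem stmt_7 (n : ℕ) (A : Fin n → ℝ) (hA : ∀ i, 0 < A i)
    (Δ : Matrix (Fin n) (Fin n) ℝ) (hΔsym : Δ.IsSymm) (hΔpsd : Δ.PosSemidef) (hΔne : Δ ≠ 0)
    (M : Matrix (Fin n) (Fin n) ℝ)
    (hM : M = Matrix.diagonal (fun i => (Real.sqrt (A i))⁻¹) * Δ *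
      Matrix.diagonal (fun i => (Real.sqrt (A i))⁻¹))
    (lamMax : ℝ)
    (hlamUb : ∀ v : Fin n → ℝ, v ⬝ᵥ M.mulVec v ≤ lamMax * (v ⬝ᵥ v))
    (hlamAtt : ∃ v : Fin n → ℝ, v ≠ 0 ∧ v ⬝ᵥ M.mulVec v = lamMax * (v ⬝ᵥ v))
    (βcr : ℝ) (hβcr : βcr = 1 / (2 * lamMax)) :
    (∀ β : ℝ, 0 < β → β < βcr → (Matrix.diagonal A - (2 * β) • Δ).PosDef) ∧
    (Matrix.diagonal A - (2 * βcr) • Δ).PosSemidef ∧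
    (∃ Ψ : Fin n → ℝ, Ψ ≠ 0 ∧ (Matrix.diagonal A - (2 * βcr) • Δ).mulVec Ψ = 0) ∧
    (∀ β : ℝ, βcr < β →
      ∃ Ψ : Fin n → ℝ, Ψ ⬝ᵥ (Matrix.diagonal A - (2 * β) • Δ).mulVec Ψ < 0) :=
  stmt_7_general n A hA Δ hΔpsd hΔne M hM lamMax hlamUb hlamAtt βcr hβcr
end

section
/- In the autonomy-aware clustering setup with squared Euclidean cost and autonomy independent of Y, the second directional derivative of the free energy F at Y in any direction Ψ = (ψ_1ᵀ,…,ψ_Kᵀ)ᵀ ∈ ℝ^{Kd} can be written as d²/dε² F(Y + εΨ)|_{ε=0} = Ψᵀ [ 2 P̂_πρ^Y − 4β ( Σ_{i=1}^N Σ_{j=1}^K P_A^{ij} z_i z_iᵀ P^{ij} − Σ_{i=1}^N ρ(i) P^i z_i z_iᵀ P^i ) ] Ψ. -/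
open Matrix

private lemma norm_sq_eq_sum {d : ℕ} (v : EuclideanSpace ℝ (Fin d)) :
    ‖v‖ ^ 2 = ∑ m, v m ^ 2 := by
  rw [EuclideanSpace.norm_eq, Real.sq_sqrt (by positivity)]
  simp [sq_abs]

private lemma kron_mulVec {K d : ℕ} (w : Fin K → ℝ) (v : (Fin K × Fin d) → ℝ) :
    (Matrix.kroneckerMap (· * ·) (Matrix.diagonal w)
      (1 : Matrix (Fin d) (Fin d) ℝ)).mulVec v = fun km => w km.1 * v km := by
  funext km
  obtain ⟨k, m⟩ := km
  simp [Matrix.mulVec, dotProduct, Fintype.sum_prod_type, Matrix.diagonal,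
    Matrix.one_apply, ite_and, mul_ite, Finset.sum_ite_eq, Finset.sum_ite_eq']

private lemma vecMulVec_mulVec' {n : Type*} [Fintype n] (a b v : n → ℝ) :
    (Matrix.vecMulVec a b).mulVec v = (b ⬝ᵥ v) • a := by
  funext r
  simp [Matrix.mulVec, Matrix.vecMulVec, dotProduct, Finset.mul_sum,
    mul_comm, mul_assoc, mul_left_comm]

private lemma sum_mulVec' {n : Type*} [Fintype n] {m : ℕ} (Ms : Fin m → Matrix n n ℝ)
    (v : n → ℝ) : (∑ i, Ms i).mulVec v = ∑ i, (Ms i).mulVec v := by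
  funext r
  simp [Matrix.mulVec, dotProduct, Finset.sum_apply, Matrix.sum_apply, Finset.sum_mul]
  rw [Finset.sum_comm]

private lemma dot_sum' {n : Type*} [Fintype n] {m : ℕ} (v : n → ℝ) (ws : Fin m → n → ℝ) :
    v ⬝ᵥ (∑ i, ws i) = ∑ i, v ⬝ᵥ ws i := by
  simp [dotProduct, Finset.sum_apply, Finset.mul_sum]
  rw [Finset.sum_comm]

private lemma lse_second_deriv (N K : ℕ) (hK : 0 < K) (β : ℝ) (ρ : Fin N → ℝ)
    (A B C : Fin N → Fin K → ℝ) :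
    deriv (deriv fun ε : ℝ => -(1/β) * ∑ i, ρ i *
      Real.log (∑ j, Real.exp (-β * (A i j + B i j * ε + C i j * ε ^ 2)))) 0
    = -(1/β) * ∑ i, ρ i *
      (((∑ j, Real.exp (-β * A i j) * (β ^ 2 * (B i j) ^ 2 - 2 * β * C i j)) *
          (∑ j, Real.exp (-β * A i j))
        - (∑ j, Real.exp (-β * A i j) * (-β * B i j)) ^ 2)
        / (∑ j, Real.exp (-β * A i j)) ^ 2) := by
  set e : Fin N → Fin K → ℝ → ℝ := fun i j ε => Real.exp (-β * (A i j + B i j * ε + C i j * ε ^ 2)) with he_def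
  have hq : ∀ i j (ε : ℝ), HasDerivAt (fun ε : ℝ => -β * (A i j + B i j * ε + C i j * ε ^ 2))
      (-β * (B i j + 2 * C i j * ε)) ε := by
    intro i j ε
    have h1 : HasDerivAt (fun ε : ℝ => A i j + B i j * ε + C i j * ε ^ 2)
        (B i j + 2 * C i j * ε) ε := by
      have : HasDerivAt (fun ε : ℝ => A i j + B i j * ε + C i j * ε ^ 2)
          (0 + B i j * 1 + C i j * (2 * ε ^ 1)) ε :=
        (((hasDerivAt_const ε (A i j)).add ((hasDerivAt_id ε).const_mul (B i j))).add
          ((hasDerivAt_pow 2 ε).const_mul (C i j)))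
      simpa [mul_comm, mul_assoc, mul_left_comm] using this
    simpa using h1.const_mul (-β)
  have he : ∀ i j (ε : ℝ), HasDerivAt (e i j) (e i j ε * (-β * (B i j + 2 * C i j * ε))) ε := by
    intro i j ε
    simpa [he_def] using (hq i j ε).exp
  set u : Fin N → ℝ → ℝ := fun i ε => ∑ j, e i j ε with hu_def
  set u' : Fin N → ℝ → ℝ := fun i ε => ∑ j, e i j ε * (-β * (B i j + 2 * C i j * ε)) with hu'_def
  set u'' : Fin N → ℝ → ℝ := fun i ε =>
    ∑ j, (e i j ε * (-β * (B i j + 2 * C i j * ε)) * (-β * (B i j + 2 * C i j * ε))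
      + e i j ε * (-β * (2 * C i j))) with hu''_def
  have hu : ∀ i (ε : ℝ), HasDerivAt (u i) (u' i ε) ε := by
    intro i ε
    exact HasDerivAt.fun_sum fun j _ => he i j ε
  have hupos : ∀ i (ε : ℝ), 0 < u i ε := by
    intro i ε
    exact Finset.sum_pos (fun j _ => Real.exp_pos _)
      (by simp [Finset.univ_nonempty_iff, Fin.pos_iff_nonempty.mp hK])
  have hu' : ∀ i (ε : ℝ), HasDerivAt (u' i) (u'' i ε) ε := by
    intro i ε
    refine HasDerivAt.fun_sum fun j _ => ?_
    have hlin : HasDerivAt (fun ε : ℝ => -β * (B i j + 2 * C i j * ε)) (-β * (2 * C i j)) ε := by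
      have : HasDerivAt (fun ε : ℝ => B i j + 2 * C i j * ε) (2 * C i j) ε := by
        simpa using (((hasDerivAt_id ε).const_mul (2 * C i j)).const_add (B i j))
      simpa [mul_assoc] using this.const_mul (-β)
    exact (he i j ε).mul hlin
  set G : ℝ → ℝ := fun ε => -(1/β) * ∑ i, ρ i * (u' i ε / u i ε) with hG_def
  have hg : ∀ ε : ℝ, HasDerivAt (fun ε : ℝ => -(1/β) * ∑ i, ρ i * Real.log (u i ε)) (G ε) ε := by
    intro ε
    refine HasDerivAt.const_mul _ (HasDerivAt.fun_sum fun i _ => ?_)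
    exact ((hu i ε).log (hupos i ε).ne').const_mul (ρ i)
  have hderiv1 : (deriv fun ε : ℝ => -(1/β) * ∑ i, ρ i * Real.log (u i ε)) = G :=
    funext fun ε => (hg ε).deriv
  have hg2 : HasDerivAt G
      (-(1/β) * ∑ i, ρ i * ((u'' i 0 * u i 0 - u' i 0 * u' i 0) / (u i 0) ^ 2)) 0 := by
    refine HasDerivAt.const_mul _ (HasDerivAt.fun_sum fun i _ => ?_)
    exact ((hu' i 0).div (hu i 0) (hupos i 0).ne').const_mul (ρ i)
  rw [show (fun ε : ℝ => -(1/β) * ∑ i, ρ i *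
      Real.log (∑ j, Real.exp (-β * (A i j + B i j * ε + C i j * ε ^ 2))))
    = (fun ε : ℝ => -(1/β) * ∑ i, ρ i * Real.log (u i ε)) from rfl, hderiv1, hg2.deriv]
  congr 1
  refine Finset.sum_congr rfl fun i _ => ?_
  congr 1
  have h0 : ∀ j, e i j 0 = Real.exp (-β * A i j) := by intro j; simp [he_def]
  have hA : u i 0 = ∑ j, Real.exp (-β * A i j) := by simp [hu_def, h0]
  have hB : u' i 0 = ∑ j, Real.exp (-β * A i j) * (-β * B i j) := by
    simp only [hu'_def]; refine Finset.sum_congr rfl fun j _ => ?_; rw [h0]; ring_nf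
  have hC : u'' i 0 = ∑ j, Real.exp (-β * A i j) * (β ^ 2 * (B i j) ^ 2 - 2 * β * C i j) := by
    simp only [hu''_def]; refine Finset.sum_congr rfl fun j _ => ?_; rw [h0]; ring_nf
  rw [hA, hB, hC]; ring

set_option maxHeartbeats 1000000 in
/-- The second directional derivative of the free energy at `Y` in direction
`Ψ` equals `Ψᵀ [2 P̂_πρ^Y − 4β (∑ i ∑ j P_A^{ij} z_i z_iᵀ P^{ij} − ∑ i ρ(i) P^i z_i z_iᵀ P^i)] Ψ`,
where `P̂_πρ^Y = diag(p_πρ^Y(1),…,p_πρ^Y(K)) ⊗ I_d` is the cluster-mass matrix. -/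
theorem stmt_8 (N K d : ℕ) (β : ℝ) (hβ : 0 < β)
    (x : Fin N → EuclideanSpace ℝ (Fin d)) (ρ : Fin N → ℝ)
    (hρ : ∀ i, 0 ≤ ρ i) (hρ1 : ∑ i, ρ i = 1)
    (p : Fin K → Fin K → Fin N → ℝ)
    (hp : ∀ k j i, 0 ≤ p k j i) (hp1 : ∀ j i, ∑ k, p k j i = 1)
    (Y : Fin K → EuclideanSpace ℝ (Fin d))
    (davg : (Fin K → EuclideanSpace ℝ (Fin d)) → Fin N → Fin K → ℝ)
    (hdavg : ∀ Y' i j, davg Y' i j = ∑ k, p k j i * ‖x i - Y' k‖ ^ 2)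
    (πpol : Fin K → Fin N → ℝ)
    (hπ : ∀ j i, πpol j i =
      Real.exp (-β * davg Y i j) / ∑ ℓ, Real.exp (-β * davg Y i ℓ))
    (F : (Fin K → EuclideanSpace ℝ (Fin d)) → ℝ)
    (hF : ∀ Y', F Y' = -(1 / β) * ∑ i, ρ i * Real.log (∑ j, Real.exp (-β * davg Y' i j)))
    (z : Fin N → (Fin K × Fin d) → ℝ)
    (hz : ∀ i km, z i km = Y km.1 km.2 - x i km.2)
    (Pij : Fin N → Fin K → Matrix (Fin K × Fin d) (Fin K × Fin d) ℝ)
    (hPij : ∀ i j, Pij i j = Matrix.kroneckerMap (· * ·)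
      (Matrix.diagonal fun k => p k j i) (1 : Matrix (Fin d) (Fin d) ℝ))
    (PA : Fin N → Fin K → Matrix (Fin K × Fin d) (Fin K × Fin d) ℝ)
    (hPA : ∀ i j, PA i j = (ρ i * πpol j i) • Pij i j)
    (Pbar : Fin N → Matrix (Fin K × Fin d) (Fin K × Fin d) ℝ)
    (hPbar : ∀ i, Pbar i = ∑ j, πpol j i • Pij i j)
    (Δ : Matrix (Fin K × Fin d) (Fin K × Fin d) ℝ)
    (hΔ : Δ = ∑ i, ((∑ j, PA i j * Matrix.vecMulVec (z i) (z i) * Pij i j)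
      - ρ i • (Pbar i * Matrix.vecMulVec (z i) (z i) * Pbar i)))
    (mass : Fin K → ℝ)
    (hmass : ∀ ℓ, mass ℓ = ∑ i, ∑ j, ρ i * πpol j i * p ℓ j i)
    (Pmass : Matrix (Fin K × Fin d) (Fin K × Fin d) ℝ)
    (hPmass : Pmass = Matrix.kroneckerMap (· * ·)
      (Matrix.diagonal mass) (1 : Matrix (Fin d) (Fin d) ℝ))
    (Ψ : (Fin K × Fin d) → ℝ)
    (Ψv : Fin K → EuclideanSpace ℝ (Fin d)) (hΨv : ∀ k m, Ψv k m = Ψ (k, m)) :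
    deriv (deriv fun ε : ℝ => F fun k => Y k + ε • Ψv k) 0
      = Ψ ⬝ᵥ ((2 : ℝ) • Pmass - (4 * β) • Δ).mulVec Ψ := by
  rcases Nat.eq_zero_or_pos K with hK0 | hK
  · -- degenerate case K = 0
    subst hK0
    have hconst : (fun ε : ℝ => F fun k => Y k + ε • Ψv k)
        = fun _ : ℝ => -(1/β) * ∑ i, ρ i * Real.log 0 := by
      funext ε
      rw [hF]
      simp
    rw [hconst]
    rw [show (deriv fun _ : ℝ => -(1/β) * ∑ i, ρ i * Real.log 0) = fun _ : ℝ => (0:ℝ) from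
      funext fun x => deriv_const x _]
    rw [deriv_const]
    simp [dotProduct]
  -- main case
  -- quadratic expansion coefficients
  obtain ⟨cK, hcK⟩ : ∃ cK : Fin K → ℝ, ∀ k, cK k = ∑ m, Ψ (k, m) ^ 2 :=
    ⟨_, fun _ => rfl⟩
  obtain ⟨bK, hbK⟩ : ∃ bK : Fin N → Fin K → ℝ,
      ∀ i k, bK i k = 2 * ∑ m, z i (k, m) * Ψ (k, m) := ⟨_, fun _ _ => rfl⟩
  obtain ⟨Bc, hBc⟩ : ∃ Bc : Fin N → Fin K → ℝ,
      ∀ i j, Bc i j = ∑ k, p k j i * bK i k := ⟨_, fun _ _ => rfl⟩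
  obtain ⟨Cc, hCc⟩ : ∃ Cc : Fin N → Fin K → ℝ,
      ∀ i j, Cc i j = ∑ k, p k j i * cK k := ⟨_, fun _ _ => rfl⟩
  have hquad : ∀ (ε : ℝ) i j, davg (fun k => Y k + ε • Ψv k) i j
      = davg Y i j + Bc i j * ε + Cc i j * ε ^ 2 := by
    intro ε i j
    rw [hdavg]
    have hk : ∀ k, ‖x i - (Y k + ε • Ψv k)‖ ^ 2
        = ‖x i - Y k‖ ^ 2 + bK i k * ε + cK k * ε ^ 2 := by
      intro k
      rw [norm_sq_eq_sum, norm_sq_eq_sum, hbK, hcK]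
      have happ : ∀ m, (x i - (Y k + ε • Ψv k)) m = x i m - Y k m - ε * Ψ (k, m) := by
        intro m
        simp [hΨv]
        ring
      have happ2 : ∀ m, (x i - Y k) m = x i m - Y k m := by intro m; simp
      simp only [happ, happ2]
      rw [Finset.mul_sum, Finset.sum_mul, Finset.sum_mul, ← Finset.sum_add_distrib,
        ← Finset.sum_add_distrib]
      refine Finset.sum_congr rfl fun m _ => ?_
      rw [hz]
      ring
    calc ∑ k, p k j i * ‖x i - (Y k + ε • Ψv k)‖ ^ 2
        = ∑ k, (p k j i * ‖x i - Y k‖ ^ 2 + (p k j i * bK i k) * ε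
            + (p k j i * cK k) * ε ^ 2) := by
          refine Finset.sum_congr rfl fun k _ => ?_
          rw [hk k]; ring
      _ = (∑ k, p k j i * ‖x i - Y k‖ ^ 2) + (∑ k, p k j i * bK i k) * ε
            + (∑ k, p k j i * cK k) * ε ^ 2 := by
          rw [Finset.sum_add_distrib, Finset.sum_add_distrib, ← Finset.sum_mul,
            ← Finset.sum_mul]
      _ = davg Y i j + Bc i j * ε + Cc i j * ε ^ 2 := by
          rw [hdavg, hBc, hCc]
  have hpath : (fun ε : ℝ => F fun k => Y k + ε • Ψv k)
      = fun ε : ℝ => -(1/β) * ∑ i, ρ i *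
        Real.log (∑ j, Real.exp (-β * (davg Y i j + Bc i j * ε + Cc i j * ε ^ 2))) := by
    funext ε
    rw [hF]
    congr 1
    refine Finset.sum_congr rfl fun i _ => ?_
    congr 1
    refine congrArg Real.log (Finset.sum_congr rfl fun j _ => ?_)
    rw [hquad]
  rw [hpath]
  refine (lse_second_deriv N K hK β ρ (fun i j => davg Y i j) Bc Cc).trans ?_
  -- abbreviations
  obtain ⟨S, hS⟩ : ∃ S : Fin N → ℝ, ∀ i, S i = ∑ j, Real.exp (-β * davg Y i j) :=
    ⟨_, fun _ => rfl⟩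
  have hSpos : ∀ i, 0 < S i := fun i => by
    rw [hS]
    exact Finset.sum_pos (fun j _ => Real.exp_pos _)
      (by simp [Finset.univ_nonempty_iff, Fin.pos_iff_nonempty.mp hK])
  have hexp : ∀ i j, Real.exp (-β * davg Y i j) = πpol j i * S i := by
    intro i j
    rw [hπ, ← hS, div_mul_cancel₀ _ (hSpos i).ne']
  obtain ⟨W2, hW2⟩ : ∃ W2 : Fin N → ℝ,
      ∀ i, W2 i = ∑ j, πpol j i * (β ^ 2 * (Bc i j) ^ 2 - 2 * β * Cc i j) :=
    ⟨_, fun _ => rfl⟩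
  obtain ⟨W1, hW1⟩ : ∃ W1 : Fin N → ℝ,
      ∀ i, W1 i = ∑ j, πpol j i * (-β * Bc i j) := ⟨_, fun _ => rfl⟩
  have hV2 : ∀ i, (∑ j, Real.exp (-β * davg Y i j) * (β ^ 2 * (Bc i j) ^ 2 - 2 * β * Cc i j))
      = S i * W2 i := by
    intro i
    rw [hW2, Finset.mul_sum]
    refine Finset.sum_congr rfl fun j _ => ?_
    rw [hexp]; ring
  have hV1 : ∀ i, (∑ j, Real.exp (-β * davg Y i j) * (-β * Bc i j)) = S i * W1 i := by
    intro i
    rw [hW1, Finset.mul_sum]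
    refine Finset.sum_congr rfl fun j _ => ?_
    rw [hexp]; ring
  have hLHS : -(1/β) * ∑ i, ρ i *
      (((∑ j, Real.exp (-β * davg Y i j) * (β ^ 2 * (Bc i j) ^ 2 - 2 * β * Cc i j)) *
          (∑ j, Real.exp (-β * davg Y i j))
        - (∑ j, Real.exp (-β * davg Y i j) * (-β * Bc i j)) ^ 2)
        / (∑ j, Real.exp (-β * davg Y i j)) ^ 2)
      = -(1/β) * ∑ i, ρ i * (W2 i - (W1 i) ^ 2) := by
    congr 1
    refine Finset.sum_congr rfl fun i _ => ?_
    rw [hV2, hV1, ← hS]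
    have h := (hSpos i).ne'
    congr 1
    field_simp
  rw [hLHS]
  -- the matrix algebra on the RHS
  obtain ⟨s, hs⟩ : ∃ s : Fin N → Fin K → ℝ,
      ∀ i j, s i j = ∑ km : Fin K × Fin d, p km.1 j i * z i km * Ψ km :=
    ⟨_, fun _ _ => rfl⟩
  have hBs : ∀ i j, Bc i j = 2 * s i j := by
    intro i j
    rw [hs, hBc]
    simp only [Fintype.sum_prod_type]
    rw [Finset.mul_sum]
    refine Finset.sum_congr rfl fun k _ => ?_
    rw [hbK, Finset.mul_sum, Finset.mul_sum, Finset.mul_sum]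
    refine Finset.sum_congr rfl fun m _ => ?_
    ring
  have hPijv : ∀ i j (v : (Fin K × Fin d) → ℝ),
      (Pij i j).mulVec v = fun km => p km.1 j i * v km := by
    intro i j v
    rw [hPij, kron_mulVec]
  have hdotPz : ∀ i j, z i ⬝ᵥ (Pij i j).mulVec Ψ = s i j := by
    intro i j
    rw [hPijv, hs]
    simp only [dotProduct]
    refine Finset.sum_congr rfl fun km _ => ?_
    ring
  have hdotPΨ : ∀ i j, Ψ ⬝ᵥ (Pij i j).mulVec (z i) = s i j := by
    intro i j
    rw [hPijv, hs]
    simp only [dotProduct]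
    refine Finset.sum_congr rfl fun km _ => ?_
    ring
  -- Pmass term
  have hT1 : Ψ ⬝ᵥ Pmass.mulVec Ψ = ∑ i, ρ i * ∑ j, πpol j i * Cc i j := by
    rw [hPmass, kron_mulVec]
    have h1 : (Ψ ⬝ᵥ fun km => mass km.1 * Ψ km) = ∑ k, mass k * cK k := by
      simp only [dotProduct, Fintype.sum_prod_type]
      refine Finset.sum_congr rfl fun k _ => ?_
      rw [hcK, Finset.mul_sum]
      refine Finset.sum_congr rfl fun m _ => ?_
      ring
    rw [h1]
    calc ∑ k, mass k * cK k
        = ∑ k, ∑ i, ∑ j, ρ i * πpol j i * p k j i * cK k := by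
          refine Finset.sum_congr rfl fun k _ => ?_
          rw [hmass, Finset.sum_mul]
          exact Finset.sum_congr rfl fun i _ => by rw [Finset.sum_mul]
      _ = ∑ i, ∑ k, ∑ j, ρ i * πpol j i * p k j i * cK k := Finset.sum_comm
      _ = ∑ i, ∑ j, ∑ k, ρ i * πpol j i * p k j i * cK k :=
          Finset.sum_congr rfl fun i _ => Finset.sum_comm
      _ = ∑ i, ρ i * ∑ j, πpol j i * Cc i j := by
          refine Finset.sum_congr rfl fun i _ => ?_
          rw [Finset.mul_sum]
          refine Finset.sum_congr rfl fun j _ => ?_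
          rw [hCc, Finset.mul_sum, Finset.mul_sum]
          refine Finset.sum_congr rfl fun k _ => ?_
          ring
  -- Δ term
  have hT2 : Ψ ⬝ᵥ Δ.mulVec Ψ
      = ∑ i, ((∑ j, ρ i * πpol j i * s i j * s i j)
        - ρ i * ((∑ j, πpol j i * s i j) * (∑ j, πpol j i * s i j))) := by
    rw [hΔ, sum_mulVec', dot_sum']
    refine Finset.sum_congr rfl fun i _ => ?_
    rw [Matrix.sub_mulVec, dotProduct_sub]
    congr 1
    · rw [sum_mulVec', dot_sum']
      refine Finset.sum_congr rfl fun j _ => ?_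
      rw [← Matrix.mulVec_mulVec, ← Matrix.mulVec_mulVec, vecMulVec_mulVec', hdotPz, hPA,
        Matrix.smul_mulVec, Matrix.mulVec_smul, dotProduct_smul,
        dotProduct_smul, hdotPΨ]
      simp only [smul_eq_mul]
      ring
    · have hPbardot : ∀ (v w : (Fin K × Fin d) → ℝ),
          v ⬝ᵥ (Pbar i).mulVec w = ∑ j, πpol j i * (v ⬝ᵥ (Pij i j).mulVec w) := by
        intro v w
        rw [hPbar, sum_mulVec', dot_sum']
        refine Finset.sum_congr rfl fun j _ => ?_
        rw [Matrix.smul_mulVec, dotProduct_smul]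
        rfl
      rw [Matrix.smul_mulVec, dotProduct_smul, ← Matrix.mulVec_mulVec,
        ← Matrix.mulVec_mulVec, vecMulVec_mulVec', Matrix.mulVec_smul,
        dotProduct_smul, hPbardot, hPbardot]
      have e1 : ∑ j, πpol j i * (z i ⬝ᵥ (Pij i j).mulVec Ψ) = ∑ j, πpol j i * s i j :=
        Finset.sum_congr rfl fun j _ => by rw [hdotPz]
      have e2 : ∑ j, πpol j i * (Ψ ⬝ᵥ (Pij i j).mulVec (z i)) = ∑ j, πpol j i * s i j :=
        Finset.sum_congr rfl fun j _ => by rw [hdotPΨ]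
      rw [e1, e2]
      simp only [smul_eq_mul]
  -- put it together
  have hRHS : Ψ ⬝ᵥ ((2 : ℝ) • Pmass - (4 * β) • Δ).mulVec Ψ
      = 2 * (Ψ ⬝ᵥ Pmass.mulVec Ψ) - (4 * β) * (Ψ ⬝ᵥ Δ.mulVec Ψ) := by
    rw [Matrix.sub_mulVec, Matrix.smul_mulVec, Matrix.smul_mulVec,
      dotProduct_sub, dotProduct_smul, dotProduct_smul]
    simp only [smul_eq_mul]
  rw [hRHS, hT1, hT2]
  rw [Finset.mul_sum, Finset.mul_sum, Finset.mul_sum, ← Finset.sum_sub_distrib]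
  refine Finset.sum_congr rfl fun i _ => ?_
  -- per-i identity
  have hW2' : W2 i = 4 * β ^ 2 * (∑ j, πpol j i * (s i j) ^ 2)
      - 2 * β * (∑ j, πpol j i * Cc i j) := by
    rw [hW2, Finset.mul_sum, Finset.mul_sum, ← Finset.sum_sub_distrib]
    refine Finset.sum_congr rfl fun j _ => ?_
    rw [hBs]; ring
  have hW1' : W1 i = -2 * β * ∑ j, πpol j i * s i j := by
    rw [hW1, Finset.mul_sum]
    refine Finset.sum_congr rfl fun j _ => ?_
    rw [hBs]; ring
  have hsum2 : ∑ j, ρ i * πpol j i * s i j * s i j = ρ i * ∑ j, πpol j i * (s i j) ^ 2 := by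
    rw [Finset.mul_sum]
    refine Finset.sum_congr rfl fun j _ => ?_
    ring
  rw [hW2', hW1', hsum2]
  have hβ' : β ≠ 0 := hβ.ne'
  field_simp
  ring
end
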